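/- Let η_1, ..., η_n be n ≥ 2 i.i.d. real-valued random variables with common distribution V belonging to the class S(α) for some α ≥ 0. Then lim_{c→∞} lim_{x→∞} Pr(Σ_{i=1}^n η_i > x, η_1 > c, η_2 > c) / V̄(x) = 0. -/

import Mathlib

open MeasureTheory ProbabilityTheory Filter Asymptotics

noncomputable section

/-- The tail function `Ū(x) = U((x,∞))` of a measure on `ℝ`. -/
def tailDist (μ : Measure ℝ) (x : ℝ) : ℝ := (μ (Set.Ioi x)).toReal

/-- Convolution of two measures on `ℝ`. -/
def convDist (μ ν : Measure ℝ) : Measure ℝ := (μ.prod ν).map (fun p => p.1 + p.2)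

/-- The distribution with CDF `V(x)𝟙_{x ≥ 0}`, i.e. the pushforward under `x ↦ max x 0`. -/
def posMod (μ : Measure ℝ) : Measure ℝ := μ.map (fun x => max x 0)

/-- `V̂(α) = ∫ e^{αx} V(dx)`. -/
def mgfVal (μ : Measure ℝ) (α : ℝ) : ℝ := ∫ x, Real.exp (α * x) ∂μ

/-- The convolution-equivalence class `S(α)`: a distribution `V` on `ℝ` is in `S(α)` if
the distribution with CDF `V(x)𝟙_{x ≥ 0}` has everywhere positive tail,
`V̄(x-y)/V̄(x) → e^{αy}` for all `y`, `V̂(α) = ∫ e^{αx} V(dx) < ∞`, and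
`\overline{V^{2*}}(x)/V̄(x) → 2V̂(α)`. -/
def MemCE (α : ℝ) (V : Measure ℝ) : Prop :=
  (∀ x : ℝ, 0 < tailDist (posMod V) x) ∧
  (∀ y : ℝ, Tendsto (fun x => tailDist (posMod V) (x - y) / tailDist (posMod V) x)
      atTop (nhds (Real.exp (α * y)))) ∧
  Integrable (fun x => Real.exp (α * x)) (posMod V) ∧
  Tendsto (fun x => tailDist (convDist (posMod V) (posMod V)) x / tailDist (posMod V) x)
      atTop (nhds (2 * mgfVal (posMod V) α))

/-- Strongly regular variation `R*_{-α}`: the distribution `V` with tail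
`V̄(x) = Ū(eˣ)/Ū(0)` (i.e. the conditional law of `ln ξ` given `ξ > 0`, where `ξ ∼ U`)
belongs to `S(α)`. -/
def MemSRV (α : ℝ) (U : Measure ℝ) : Prop :=
  U (Set.Ioi 0) ≠ 0 ∧
  MemCE α (((U (Set.Ioi 0))⁻¹ • U.restrict (Set.Ioi 0)).map Real.log)

/-- Regular variation `R_{-α}`: `Ū(x) > 0` for all `x` and `Ū(xy)/Ū(x) → y^{-α}` for `y > 0`. -/
def MemRV (α : ℝ) (U : Measure ℝ) : Prop :=
  (∀ x : ℝ, 0 < tailDist U x) ∧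
  ∀ y : ℝ, 0 < y →
    Tendsto (fun x => tailDist U (x * y) / tailDist U x) atTop (nhds (y ^ (-α)))

/-- Assumption A: every convex combination `pF + (1-p)G`, `0 < p < 1`,
is of strongly regular variation with index `-α`. -/
def AssumpA (α : ℝ) (F G : Measure ℝ) : Prop :=
  ∀ p : ℝ, 0 < p → p < 1 →
    MemSRV α (ENNReal.ofReal p • F + ENNReal.ofReal (1 - p) • G)

end

/-!
Write `Q` for the law `posMod V` of `max η 0`, which lies in `S(α)` and has the same tail as `V`
on `[0, ∞)`. The key fact is the closure property of `S(α)`: if `Ū/Q̄ → k` and `W̄/Q̄ → l`, then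
the tail of `U * W` over `Q̄` tends to `k Ŵ(α) + l Û(α)`. By independence the probability in
question is the tail of `V_c * V_c * V^{*(n-2)}` with `V_c = V|_{(c,∞)}`, so iterating the
closure property gives its tail ratio as a polynomial without constant term in
`β(c) = ∫_{(c,∞)} e^{αu} dV`, and `β(c) → 0` as `c → ∞`.
-/

open Set
open scoped Topology

section Tail

variable (μ ν : Measure ℝ)

lemma tailDist_nonneg (x : ℝ) : 0 ≤ tailDist μ x := ENNReal.toReal_nonneg

lemma tailDist_antitone [IsFiniteMeasure μ] : Antitone (tailDist μ) := fun _ _ hab =>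
  ENNReal.toReal_mono (measure_ne_top _ _) (measure_mono (Ioi_subset_Ioi hab))

lemma tailDist_le_measure_univ [IsFiniteMeasure μ] (x : ℝ) :
    tailDist μ x ≤ (μ univ).toReal :=
  ENNReal.toReal_mono (measure_ne_top _ _) (measure_mono (subset_univ _))

lemma tailDist_add [IsFiniteMeasure μ] [IsFiniteMeasure ν] (x : ℝ) :
    tailDist (μ + ν) x = tailDist μ x + tailDist ν x := by
  simp [tailDist, ENNReal.toReal_add (measure_ne_top _ _) (measure_ne_top _ _)]

lemma tailDist_restrict_Ioi (T x : ℝ) :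
    tailDist (μ.restrict (Ioi T)) x = tailDist μ (max x T) := by
  rw [tailDist, Measure.restrict_apply measurableSet_Ioi, Ioi_inter_Ioi, tailDist]

lemma tailDist_posMod {x : ℝ} (hx : 0 ≤ x) : tailDist (posMod μ) x = tailDist μ x := by
  rw [tailDist, posMod, Measure.map_apply (by fun_prop) measurableSet_Ioi]
  congr 2
  ext a
  simp only [mem_preimage, mem_Ioi, lt_max_iff, or_iff_left_iff_imp]
  exact fun h => (hx.not_gt h).elim

lemma integrable_exp_of_integrable_posMod {α : ℝ} (hα : 0 ≤ α) {μ : Measure ℝ}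
    (h : Integrable (fun u => Real.exp (α * u)) (posMod μ)) :
    Integrable (fun u => Real.exp (α * u)) μ := by
  refine ((integrable_map_measure h.aestronglyMeasurable (by fun_prop)).mp h).mono
    (by fun_prop) (Eventually.of_forall fun u => ?_)
  simp only [Real.norm_eq_abs, Real.abs_exp, Function.comp_apply]
  gcongr
  exact le_max_left u 0

instance [IsFiniteMeasure μ] : IsFiniteMeasure (posMod μ) := by
  unfold posMod; infer_instance

end Tail

section Convolution

instance (μ ν : Measure ℝ) [IsFiniteMeasure μ] [IsFiniteMeasure ν] :
    IsFiniteMeasure (convDist μ ν) :=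
  inferInstanceAs (IsFiniteMeasure (μ.conv ν))

lemma convDist_comm (μ ν : Measure ℝ) [SFinite μ] [SFinite ν] :
    convDist μ ν = convDist ν μ :=
  Measure.conv_comm μ ν

variable {ρ σ : Measure ℝ} [IsFiniteMeasure σ]

lemma tailDist_convDist (x : ℝ) :
    tailDist (convDist ρ σ) x = ∫ u, tailDist σ (x - u) ∂ρ := by
  have hs : MeasurableSet ((fun p : ℝ × ℝ => p.1 + p.2) ⁻¹' Ioi x) :=
    measurable_add measurableSet_Ioi
  rw [convDist, tailDist, Measure.map_apply measurable_add measurableSet_Ioi,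
    Measure.prod_apply hs, ← integral_toReal]
  · congr 1 with u
    congr 2 with v
    simp [sub_lt_iff_lt_add']
  · exact (measurable_measure_prodMk_left hs).aemeasurable
  · exact Eventually.of_forall fun u => measure_lt_top _ _

lemma integrable_tailDist_sub [IsFiniteMeasure ρ] (x : ℝ) :
    Integrable (fun u => tailDist σ (x - u)) ρ := by
  refine Integrable.of_bound ((tailDist_antitone σ).measurable.comp
    (measurable_const.sub measurable_id)).aestronglyMeasurable (σ univ).toReal
    (Eventually.of_forall fun u => ?_)
  rw [Real.norm_eq_abs, abs_of_nonneg (tailDist_nonneg _ _)]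
  exact tailDist_le_measure_univ _ _

lemma tailDist_convDist_le [IsFiniteMeasure ρ] {σ' : Measure ℝ} [IsFiniteMeasure σ'] {a : ℝ}
    (h : ∀ t, tailDist σ t ≤ a * tailDist σ' t) (x : ℝ) :
    tailDist (convDist ρ σ) x ≤ a * tailDist (convDist ρ σ') x := by
  rw [tailDist_convDist, tailDist_convDist, ← integral_const_mul]
  exact integral_mono (integrable_tailDist_sub x) ((integrable_tailDist_sub x).const_mul _)
    fun u => h _

lemma tailDist_convDist_eq_add (U W : Measure ℝ) [IsFiniteMeasure U] [IsFiniteMeasure W]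
    (T x : ℝ) :
    tailDist (convDist U W) x = tailDist (convDist (U.restrict (Iic T)) W) x
      + tailDist (convDist (W.restrict (Iic T)) (U.restrict (Ioi T))) x
      + tailDist (convDist (U.restrict (Ioi T)) (W.restrict (Ioi T))) x := by
  have hU : U.restrict (Iic T) + U.restrict (Ioi T) = U := by
    rw [← compl_Iic]; exact Measure.restrict_add_restrict_compl measurableSet_Iic
  have hW : W.restrict (Iic T) + W.restrict (Ioi T) = W := by
    rw [← compl_Iic]; exact Measure.restrict_add_restrict_compl measurableSet_Iic
  rw [convDist_comm (W.restrict _), ← tailDist_add, ← tailDist_add, add_assoc]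
  congr 1
  calc convDist U W = convDist (U.restrict (Iic T) + U.restrict (Ioi T)) W := by rw [hU]
    _ = convDist (U.restrict (Iic T)) W
          + convDist (U.restrict (Ioi T)) (W.restrict (Iic T) + W.restrict (Ioi T)) := by
        rw [hW]; exact Measure.add_conv _ _ _
    _ = _ := congrArg _ (Measure.conv_add _ _ _)

end Convolution

section ExpMoments

variable {α : ℝ} {ρ σ : Measure ℝ}

lemma integrable_exp_convDist (hρ : Integrable (fun u => Real.exp (α * u)) ρ)
    (hσ : Integrable (fun u => Real.exp (α * u)) σ) :
    Integrable (fun u => Real.exp (α * u)) (convDist ρ σ) := by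
  rw [convDist, integrable_map_measure (by fun_prop) (by fun_prop)]
  simpa [Function.comp_def, mul_add, Real.exp_add] using hρ.mul_prod hσ

lemma integral_exp_convDist [SFinite ρ] [SFinite σ] :
    ∫ u, Real.exp (α * u) ∂(convDist ρ σ)
      = (∫ u, Real.exp (α * u) ∂ρ) * ∫ u, Real.exp (α * u) ∂σ := by
  rw [convDist, integral_map (by fun_prop) (by fun_prop), ← integral_prod_mul]
  simp [mul_add, Real.exp_add]

end ExpMoments

lemma tendsto_setIntegral_Iic {μ : Measure ℝ} {f : ℝ → ℝ} (hf : Integrable f μ) :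
    Tendsto (fun T => ∫ u in Iic T, f u ∂μ) atTop (𝓝 (∫ u, f u ∂μ)) := by
  have h := tendsto_setIntegral_of_monotone (fun T : ℝ => measurableSet_Iic)
    (fun _ _ h => Iic_subset_Iic.mpr h) hf.integrableOn
  rwa [iUnion_Iic, Measure.restrict_univ] at h

lemma tendsto_setIntegral_Ioi_zero {μ : Measure ℝ} {f : ℝ → ℝ} (hf : Integrable f μ) :
    Tendsto (fun T => ∫ u in Ioi T, f u ∂μ) atTop (𝓝 0) := by
  have h := tendsto_setIntegral_of_antitone (fun T : ℝ => measurableSet_Ioi)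
    (fun _ _ h => Ioi_subset_Ioi h) ⟨0, hf.integrableOn⟩
  have hempty : ⋂ T : ℝ, Ioi T = ∅ := eq_empty_of_forall_notMem fun u hu =>
    lt_irrefl u (mem_iInter.mp hu u)
  rwa [hempty, Measure.restrict_empty, integral_zero_measure] at h

lemma nonneg_of_tendsto_tailDist_div {μ Q : Measure ℝ} {κ : ℝ}
    (h : Tendsto (fun x => tailDist μ x / tailDist Q x) atTop (𝓝 κ)) : 0 ≤ κ :=
  ge_of_tendsto' h fun _ => div_nonneg (tailDist_nonneg _ _) (tailDist_nonneg _ _)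

lemma eventually_le_mul_of_tendsto_div {ι : Type*} {l : Filter ι} {f g : ι → ℝ} {κ : ℝ}
    (hg : ∀ x, 0 < g x) (h : Tendsto (fun x => f x / g x) l (𝓝 κ)) :
    ∀ᶠ x in l, f x ≤ (κ + 1) * g x := by
  filter_upwards [h.eventually (gt_mem_nhds (lt_add_one κ))] with x hx
  exact ((div_lt_iff₀ (hg x)).mp hx).le

theorem tendsto_of_forall_eventually_sandwich {ι ι' : Type*} {l : Filter ι} {m : Filter ι'}
    [m.NeBot] {f : ι → ℝ} {g h : ι' → ι → ℝ} {a b : ι' → ℝ} {c : ℝ}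
    (hg : ∀ᶠ T in m, Tendsto (g T) l (𝓝 (a T))) (hh : ∀ᶠ T in m, Tendsto (h T) l (𝓝 (b T)))
    (hlow : ∀ᶠ T in m, ∀ x, g T x ≤ f x) (hup : ∀ᶠ T in m, ∀ x, f x ≤ g T x + h T x)
    (ha : Tendsto a m (𝓝 c)) (hb : Tendsto b m (𝓝 0)) : Tendsto f l (𝓝 c) := by
  rw [Metric.tendsto_nhds]
  intro ε hε
  have hε4 : 0 < ε / 4 := by positivity
  obtain ⟨T, hgT, hhT, hlT, huT, haT, hbT⟩ := (hg.and <| hh.and <| hlow.and <| hup.and <|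
    (Metric.tendsto_nhds.mp ha _ hε4).and (Metric.tendsto_nhds.mp hb _ hε4)).exists
  filter_upwards [Metric.tendsto_nhds.mp hgT _ hε4, Metric.tendsto_nhds.mp hhT _ hε4]
    with x hgx hhx
  have := hlT x
  have := huT x
  simp only [Real.dist_eq, abs_lt, sub_zero] at haT hbT hgx hhx ⊢
  constructor <;> linarith

lemma tendsto_tailDist_restrict_Ioi_div {U Q : Measure ℝ} {k : ℝ}
    (hU : Tendsto (fun x => tailDist U x / tailDist Q x) atTop (𝓝 k)) (T : ℝ) :
    Tendsto (fun x => tailDist (U.restrict (Ioi T)) x / tailDist Q x) atTop (𝓝 k) := by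
  refine hU.congr' ?_
  filter_upwards [eventually_ge_atTop T] with x hx
  rw [tailDist_restrict_Ioi, max_eq_left hx]

/-- The class `L(α)` of the paper, for a distribution on all of `ℝ`. -/
structure IsLongTailed (α : ℝ) (Q : Measure ℝ) : Prop where
  tailDist_pos : ∀ x, 0 < tailDist Q x
  tendsto_tailDist_sub_div :
    ∀ y, Tendsto (fun x => tailDist Q (x - y) / tailDist Q x) atTop (𝓝 (Real.exp (α * y)))

namespace IsLongTailed

variable {α : ℝ} {Q : Measure ℝ} (hQ : IsLongTailed α Q)
include hQ

lemma tendsto_tailDist_div_self : Tendsto (fun x => tailDist Q x / tailDist Q x) atTop (𝓝 1) :=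
  tendsto_const_nhds.congr fun x => (div_self (hQ.tailDist_pos x).ne').symm

lemma tendsto_tailDist_sub_div_of_tendsto {μ : Measure ℝ} {κ : ℝ}
    (hμ : Tendsto (fun x => tailDist μ x / tailDist Q x) atTop (𝓝 κ)) (u : ℝ) :
    Tendsto (fun x => tailDist μ (x - u) / tailDist Q x) atTop (𝓝 (κ * Real.exp (α * u))) := by
  refine ((hμ.comp (tendsto_atTop_add_const_right atTop (-u) tendsto_id)).mul
    (hQ.tendsto_tailDist_sub_div u)).congr fun x => ?_
  have := (hQ.tailDist_pos (x - u)).ne'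
  simp only [Function.comp_apply, id_eq, ← sub_eq_add_neg]
  field_simp

/-- Dominated convergence: for `u ≤ T` the integrand `μ̄(x - u) / Q̄(x)` of the convolution
tail is at most `μ̄(x - T) / Q̄(x)`, which stays bounded by the long tail of `Q`. -/
lemma tendsto_tailDist_convDist_restrict_Iic_div (W μ : Measure ℝ) [IsFiniteMeasure W]
    [IsFiniteMeasure μ] (T : ℝ) {κ : ℝ}
    (hμ : Tendsto (fun x => tailDist μ x / tailDist Q x) atTop (𝓝 κ)) :
    Tendsto (fun x => tailDist (convDist (W.restrict (Iic T)) μ) x / tailDist Q x) atTop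
      (𝓝 (κ * ∫ u in Iic T, Real.exp (α * u) ∂W)) := by
  have hκ : 0 ≤ κ := nonneg_of_tendsto_tailDist_div hμ
  obtain ⟨t₀, ht₀⟩ := eventually_atTop.mp (eventually_le_mul_of_tendsto_div hQ.tailDist_pos hμ)
  have hshift := eventually_le_mul_of_tendsto_div hQ.tailDist_pos (hQ.tendsto_tailDist_sub_div T)
  simp_rw [tailDist_convDist, ← integral_div, ← integral_const_mul]
  refine tendsto_integral_filter_of_dominated_convergence
    (fun _ => (κ + 1) * (Real.exp (α * T) + 1)) ?_ ?_ (integrable_const _) ?_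
  · exact Eventually.of_forall fun x => (((tailDist_antitone μ).measurable.comp
      (measurable_const.sub measurable_id)).div_const _).aestronglyMeasurable
  · filter_upwards [eventually_ge_atTop (t₀ + T), hshift] with x hx hxT
    refine (ae_restrict_mem measurableSet_Iic).mono fun u (hu : u ≤ T) => ?_
    rw [Real.norm_eq_abs, abs_of_nonneg (div_nonneg (tailDist_nonneg _ _) (tailDist_nonneg _ _)),
      div_le_iff₀ (hQ.tailDist_pos x)]
    calc tailDist μ (x - u) ≤ tailDist μ (x - T) := tailDist_antitone μ (by linarith)
      _ ≤ (κ + 1) * tailDist Q (x - T) := ht₀ _ (by linarith)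
      _ ≤ (κ + 1) * ((Real.exp (α * T) + 1) * tailDist Q x) := by gcongr
      _ = _ := by ring
  · exact Eventually.of_forall (hQ.tendsto_tailDist_sub_div_of_tendsto hμ)

end IsLongTailed

/-- The class `S(α)` of the paper, for a distribution on all of `ℝ`; `MemCE α V` asks this
of `posMod V`. -/
structure IsConvEquiv (α : ℝ) (Q : Measure ℝ) : Prop extends IsLongTailed α Q where
  integrable_exp : Integrable (fun u => Real.exp (α * u)) Q
  tendsto_tailDist_convDist_self_div :
    Tendsto (fun x => tailDist (convDist Q Q) x / tailDist Q x) atTop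
      (𝓝 (2 * ∫ u, Real.exp (α * u) ∂Q))

lemma MemCE.isConvEquiv_posMod {α : ℝ} {V : Measure ℝ} (hV : MemCE α V) :
    IsConvEquiv α (posMod V) :=
  ⟨⟨hV.1, hV.2.1⟩, hV.2.2.1, hV.2.2.2⟩

namespace IsConvEquiv

variable {α : ℝ} {Q : Measure ℝ} [IsFiniteMeasure Q] (hQ : IsConvEquiv α Q)
include hQ

lemma tendsto_tailDist_convDist_restrict_Ioi_div (T : ℝ) :
    Tendsto (fun x => tailDist (convDist (Q.restrict (Ioi T)) (Q.restrict (Ioi T))) x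
      / tailDist Q x) atTop (𝓝 (2 * ∫ u in Ioi T, Real.exp (α * u) ∂Q)) := by
  have hone := hQ.tendsto_tailDist_div_self
  have hA := hQ.tendsto_tailDist_convDist_restrict_Iic_div Q Q T hone
  have hB := hQ.tendsto_tailDist_convDist_restrict_Iic_div Q (Q.restrict (Ioi T)) T
    (tendsto_tailDist_restrict_Ioi_div hone T)
  have hsplit : (∫ u in Iic T, Real.exp (α * u) ∂Q) + ∫ u in Ioi T, Real.exp (α * u) ∂Q
      = ∫ u, Real.exp (α * u) ∂Q := by
    rw [← compl_Iic]; exact integral_add_compl measurableSet_Iic hQ.integrable_exp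
  convert (hQ.tendsto_tailDist_convDist_self_div.sub hA).sub hB using 2
  · rw [tailDist_convDist_eq_add Q Q T]; ring
  · rw [← hsplit]; ring

/-- Split both factors at a level `T`. The two pieces with a factor below `T` converge by
dominated convergence; the piece with both factors above `T` is at most a multiple of `Q_T * Q_T`,
whose tail ratio `2 ∫_{(T,∞)} e^{αu} dQ` vanishes as `T → ∞`. -/
lemma tendsto_tailDist_convDist_div {U W : Measure ℝ} [IsFiniteMeasure U] [IsFiniteMeasure W]
    {k l : ℝ} (hU : Tendsto (fun x => tailDist U x / tailDist Q x) atTop (𝓝 k))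
    (hW : Tendsto (fun x => tailDist W x / tailDist Q x) atTop (𝓝 l))
    (hUi : Integrable (fun u => Real.exp (α * u)) U)
    (hWi : Integrable (fun u => Real.exp (α * u)) W) :
    Tendsto (fun x => tailDist (convDist U W) x / tailDist Q x) atTop
      (𝓝 (k * (∫ u, Real.exp (α * u) ∂W) + l * ∫ u, Real.exp (α * u) ∂U)) := by
  have hk := nonneg_of_tendsto_tailDist_div hU
  have hl := nonneg_of_tendsto_tailDist_div hW
  obtain ⟨tU, htU⟩ := eventually_atTop.mp (eventually_le_mul_of_tendsto_div hQ.tailDist_pos hU)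
  obtain ⟨tW, htW⟩ := eventually_atTop.mp (eventually_le_mul_of_tendsto_div hQ.tailDist_pos hW)
  set QT := fun T => Q.restrict (Ioi T)
  have hC : ∀ T, tU ≤ T → tW ≤ T → ∀ x,
      tailDist (convDist (U.restrict (Ioi T)) (W.restrict (Ioi T))) x
        ≤ (k + 1) * (l + 1) * tailDist (convDist (QT T) (QT T)) x := by
    intro T hTU hTW x
    have hUT : ∀ t, tailDist (U.restrict (Ioi T)) t ≤ (k + 1) * tailDist (QT T) t := fun t => by
      simp only [QT, tailDist_restrict_Ioi]; exact htU _ (hTU.trans (le_max_right _ _))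
    have hWT : ∀ t, tailDist (W.restrict (Ioi T)) t ≤ (l + 1) * tailDist (QT T) t := fun t => by
      simp only [QT, tailDist_restrict_Ioi]; exact htW _ (hTW.trans (le_max_right _ _))
    calc _ ≤ (l + 1) * tailDist (convDist (U.restrict (Ioi T)) (QT T)) x :=
          tailDist_convDist_le hWT x
      _ = (l + 1) * tailDist (convDist (QT T) (U.restrict (Ioi T))) x := by rw [convDist_comm]
      _ ≤ (l + 1) * ((k + 1) * tailDist (convDist (QT T) (QT T)) x) := by
          gcongr; exact tailDist_convDist_le hUT x
      _ = _ := by ring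
  refine tendsto_of_forall_eventually_sandwich (m := atTop)
    (g := fun T x => tailDist (convDist (W.restrict (Iic T)) (U.restrict (Ioi T))) x
      / tailDist Q x + tailDist (convDist (U.restrict (Iic T)) W) x / tailDist Q x)
    (h := fun T x => (k + 1) * (l + 1) * (tailDist (convDist (QT T) (QT T)) x / tailDist Q x))
    (a := fun T => k * (∫ u in Iic T, Real.exp (α * u) ∂W)
      + l * ∫ u in Iic T, Real.exp (α * u) ∂U)
    (b := fun T => (k + 1) * (l + 1) * (2 * ∫ u in Ioi T, Real.exp (α * u) ∂Q))
    ?_ ?_ ?_ ?_ ?_ ?_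
  · exact Eventually.of_forall fun T =>
      (hQ.tendsto_tailDist_convDist_restrict_Iic_div W _ T
        (tendsto_tailDist_restrict_Ioi_div hU T)).add
      (hQ.tendsto_tailDist_convDist_restrict_Iic_div U W T hW)
  · exact Eventually.of_forall fun T =>
      (hQ.tendsto_tailDist_convDist_restrict_Ioi_div T).const_mul _
  · refine Eventually.of_forall fun T x => ?_
    have := div_nonneg (tailDist_nonneg (convDist (U.restrict (Ioi T)) (W.restrict (Ioi T))) x)
      (tailDist_nonneg Q x)
    simp only [tailDist_convDist_eq_add U W T x, add_div]
    linarith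
  · filter_upwards [eventually_ge_atTop tU, eventually_ge_atTop tW] with T hTU hTW x
    have := div_le_div_of_nonneg_right (hC T hTU hTW x) (tailDist_nonneg Q x)
    simp only [tailDist_convDist_eq_add U W T x, add_div, mul_div_assoc] at this ⊢
    linarith
  · exact ((tendsto_setIntegral_Iic hWi).const_mul k).add
      ((tendsto_setIntegral_Iic hUi).const_mul l)
  · simpa using ((tendsto_setIntegral_Ioi_zero hQ.integrable_exp).const_mul 2).const_mul
      ((k + 1) * (l + 1))

end IsConvEquiv

noncomputable def convPow (V : Measure ℝ) : ℕ → Measure ℝ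
  | 0 => Measure.dirac 0
  | k + 1 => convDist V (convPow V k)

section ConvPow

variable {α : ℝ} {V : Measure ℝ}

lemma integrable_exp_convPow (hV : Integrable (fun u => Real.exp (α * u)) V) :
    ∀ k, Integrable (fun u => Real.exp (α * u)) (convPow V k)
  | 0 => integrable_dirac (by simp)
  | k + 1 => integrable_exp_convDist hV (integrable_exp_convPow hV k)

variable [IsFiniteMeasure V]

instance isFiniteMeasure_convPow (k : ℕ) : IsFiniteMeasure (convPow V k) := by
  induction k with
  | zero => rw [convPow]; infer_instance
  | succ k ih => rw [convPow]; infer_instance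

lemma integral_exp_convPow : ∀ k,
    ∫ u, Real.exp (α * u) ∂(convPow V k) = (∫ u, Real.exp (α * u) ∂V) ^ k
  | 0 => by simp [convPow]
  | k + 1 => by rw [convPow, integral_exp_convDist, integral_exp_convPow k, pow_succ']

lemma IsConvEquiv.tendsto_tailDist_convPow_div {Q : Measure ℝ} [IsFiniteMeasure Q]
    (hQ : IsConvEquiv α Q) (hV : Integrable (fun u => Real.exp (α * u)) V)
    (hVQ : Tendsto (fun x => tailDist V x / tailDist Q x) atTop (𝓝 1)) :
    ∀ k, Tendsto (fun x => tailDist (convPow V k) x / tailDist Q x) atTop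
      (𝓝 (k * (∫ u, Real.exp (α * u) ∂V) ^ (k - 1)))
  | 0 => by
    refine tendsto_const_nhds.congr' ?_
    filter_upwards [eventually_ge_atTop 0] with x hx
    simp [convPow, tailDist, hx.not_gt]
  | k + 1 => by
    have h := hQ.tendsto_tailDist_convDist_div hVQ
      (hQ.tendsto_tailDist_convPow_div hV hVQ k) hV (integrable_exp_convPow hV k)
    rw [integral_exp_convPow] at h
    rw [convPow]
    convert h using 2
    rcases k with _ | k
    · simp
    · simp only [Nat.add_sub_cancel]; push_cast; ring

end ConvPow

lemma map_sum_pi_succ {k : ℕ} (W : Fin (k + 1) → Measure ℝ) [∀ i, SigmaFinite (W i)] :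
    (Measure.pi W).map (fun y => ∑ i, y i)
      = convDist (W 0) ((Measure.pi fun i : Fin k => W i.succ).map fun y => ∑ i, y i) := by
  rw [← (measurePreserving_piFinSuccAbove W 0).symm.map_eq,
    Measure.map_map (by fun_prop) (MeasurableEquiv.measurable _), convDist,
    ← Measure.map_id (μ := W 0), Measure.map_prod_map _ _ measurable_id (by fun_prop),
    Measure.map_map measurable_add (by fun_prop)]
  congr 1
  · ext p
    simp [Fin.sum_univ_succ]
  · simp [Measure.map_id]

lemma map_sum_pi_eq_convPow (V : Measure ℝ) [SigmaFinite V] :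
    ∀ k, (Measure.pi fun _ : Fin k => V).map (fun y => ∑ i, y i) = convPow V k
  | 0 => by simp [convPow]
  | k + 1 => by rw [map_sum_pi_succ, map_sum_pi_eq_convPow V k, convPow]

lemma pi_setOf_sum_gt_and_first_two_gt (V : Measure ℝ) [SigmaFinite V] (k : ℕ) (c x : ℝ) :
    (Measure.pi fun _ : Fin (k + 2) => V) {y | x < ∑ i, y i ∧ c < y 0 ∧ c < y 1}
      = convDist (V.restrict (Ioi c)) (convDist (V.restrict (Ioi c)) (convPow V k)) (Ioi x) := by
  set s : Fin (k + 2) → Set ℝ := Fin.cons (Ioi c) (Fin.cons (Ioi c) fun _ => univ)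
  have hs : {y : Fin (k + 2) → ℝ | x < ∑ i, y i ∧ c < y 0 ∧ c < y 1}
      = (fun y => ∑ i, y i) ⁻¹' Ioi x ∩ univ.pi s := by
    ext y
    simp [s, Fin.forall_fin_succ]
  rw [hs, ← Measure.restrict_apply (measurableSet_Ioi.preimage (by fun_prop)),
    Measure.restrict_pi_pi, ← Measure.map_apply (by fun_prop) measurableSet_Ioi,
    map_sum_pi_succ, map_sum_pi_succ]
  simp [map_sum_pi_eq_convPow]

lemma ProbabilityTheory.iIndepFun.measure_sum_gt_and_first_two_gt {Ω : Type*} [MeasurableSpace Ω] {P : Measure Ω}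
    [IsProbabilityMeasure P] {V : Measure ℝ} [IsProbabilityMeasure V] {k : ℕ}
    {η : Fin (k + 2) → Ω → ℝ} (hm : ∀ i, Measurable (η i)) (hlaw : ∀ i, P.map (η i) = V)
    (hIndep : iIndepFun η P) (c x : ℝ) :
    P {ω | x < ∑ i, η i ω ∧ c < η 0 ω ∧ c < η 1 ω}
      = convDist (V.restrict (Ioi c)) (convDist (V.restrict (Ioi c)) (convPow V k)) (Ioi x) := by
  have hjoint : P.map (fun ω i => η i ω) = Measure.pi fun _ => V := by
    rw [(iIndepFun_iff_map_fun_eq_pi_map fun i => (hm i).aemeasurable).mp hIndep]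
    simp_rw [hlaw]
  rw [← pi_setOf_sum_gt_and_first_two_gt, ← hjoint, Measure.map_apply (by fun_prop)]
  · rfl
  · exact (measurableSet_lt measurable_const
      (Finset.measurable_sum _ fun i _ => measurable_pi_apply i)).inter
      ((measurableSet_lt measurable_const (measurable_pi_apply _)).inter
        (measurableSet_lt measurable_const (measurable_pi_apply _)))

lemma IsConvEquiv.tendsto_tailDist_restrict_convDist_convPow_div {α : ℝ} {Q V : Measure ℝ}
    [IsFiniteMeasure Q] [IsFiniteMeasure V] (hQ : IsConvEquiv α Q)
    (hV : Integrable (fun u => Real.exp (α * u)) V)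
    (hVQ : Tendsto (fun x => tailDist V x / tailDist Q x) atTop (𝓝 1)) (k : ℕ) (c : ℝ) :
    Tendsto (fun x => tailDist (convDist (V.restrict (Ioi c))
        (convDist (V.restrict (Ioi c)) (convPow V k))) x / tailDist Q x) atTop
      (𝓝 ((∫ u in Ioi c, Real.exp (α * u) ∂V) * (∫ u, Real.exp (α * u) ∂V) ^ k
        + ((∫ u, Real.exp (α * u) ∂V) ^ k
          + k * (∫ u, Real.exp (α * u) ∂V) ^ (k - 1) * ∫ u in Ioi c, Real.exp (α * u) ∂V)
          * ∫ u in Ioi c, Real.exp (α * u) ∂V)) := by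
  have hVc := tendsto_tailDist_restrict_Ioi_div hVQ c
  have hinner := hQ.tendsto_tailDist_convDist_div hVc (hQ.tendsto_tailDist_convPow_div hV hVQ k)
    hV.restrict (integrable_exp_convPow hV k)
  rw [integral_exp_convPow] at hinner
  simpa only [integral_exp_convDist, integral_exp_convPow, one_mul] using
    hQ.tendsto_tailDist_convDist_div hVc hinner hV.restrict
      (integrable_exp_convDist hV.restrict (integrable_exp_convPow hV k))

lemma MemCE.tendsto_tailDist_div_tailDist_posMod {α : ℝ} {V : Measure ℝ} (hV : MemCE α V) :
    Tendsto (fun x => tailDist V x / tailDist (posMod V) x) atTop (𝓝 1) := by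
  refine hV.isConvEquiv_posMod.tendsto_tailDist_div_self.congr' ?_
  filter_upwards [eventually_ge_atTop 0] with x hx
  rw [tailDist_posMod V hx]

/-- Lemma 3.1: for `n ≥ 2` i.i.d. random variables with common distribution `V ∈ S(α)`,
`lim_{c→∞} lim_{x→∞} Pr(Σ ηᵢ > x, η₁ > c, η₂ > c)/V̄(x) = 0`. -/
theorem stmt_8
    {Ω : Type*} [MeasurableSpace Ω] (P : Measure Ω) [IsProbabilityMeasure P]
    (n : ℕ) (hn : 2 ≤ n)
    (V : Measure ℝ) [IsProbabilityMeasure V]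
    (η : Fin n → Ω → ℝ)
    (hm : ∀ i, Measurable (η i))
    (hlaw : ∀ i, P.map (η i) = V)
    (hIndep : iIndepFun η P)
    (α : ℝ) (hα : 0 ≤ α) (hV : MemCE α V) :
    ∃ L : ℝ → ℝ,
      (∀ c : ℝ, Tendsto (fun x =>
          (P {ω | x < ∑ i, η i ω ∧ c < η ⟨0, by omega⟩ ω ∧ c < η ⟨1, by omega⟩ ω}).toReal
            / tailDist V x) atTop (nhds (L c))) ∧
      Tendsto L atTop (nhds 0) := by
  obtain ⟨k, rfl⟩ : ∃ k, n = k + 2 := ⟨n - 2, by omega⟩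
  have hQ := hV.isConvEquiv_posMod
  have hVi := integrable_exp_of_integrable_posMod hα hQ.integrable_exp
  set M := ∫ u, Real.exp (α * u) ∂V
  refine ⟨fun c => (∫ u in Ioi c, Real.exp (α * u) ∂V) * M ^ k
    + (M ^ k + k * M ^ (k - 1) * ∫ u in Ioi c, Real.exp (α * u) ∂V)
      * ∫ u in Ioi c, Real.exp (α * u) ∂V, fun c => ?_, ?_⟩
  · refine (hQ.tendsto_tailDist_restrict_convDist_convPow_div hVi
      hV.tendsto_tailDist_div_tailDist_posMod k c).congr' ?_
    filter_upwards [eventually_ge_atTop 0] with x hx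
    rw [tailDist_posMod V hx, tailDist]
    exact congrArg (·.toReal / _) (hIndep.measure_sum_gt_and_first_two_gt hm hlaw c x).symm
  · have hcont : Continuous fun t => t * M ^ k + (M ^ k + k * M ^ (k - 1) * t) * t := by fun_prop
    have h := (hcont.tendsto 0).comp (tendsto_setIntegral_Ioi_zero hVi)
    simp only [zero_mul, mul_zero, add_zero] at h
    exact h
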